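/- arXiv:1907.06140 — 2 statements merged into one kernel-verified Lean document; each statement's English description precedes it below -/
import Mathlib

section
/- Let φ₁ : ℝⁿ → ℝ∪{+∞} be lower semicontinuous around x̄ ∈ dom φ₁, and let φᵢ : ℝⁿ → ℝ for i = 2,…,s (s ≥ 2) be locally Lipschitzian around x̄. Then the singular subdifferential sum rule holds with equality: ∂^∞(φ₁ + … + φₛ)(x̄) = ∂^∞φ₁(x̄). -/
open Filter Topology RealInnerProductSpace

noncomputable section

/-- Inner pairing on a product space (sum of the componentwise pairings). -/
instance prodInnerAux {E F : Type*} [Inner ℝ E] [Inner ℝ F] : Inner ℝ (E × F) :=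
  ⟨fun p q => inner ℝ p.1 q.1 + inner ℝ p.2 q.2⟩

variable {E Y : Type*}

/-- The prenormal (Fréchet/regular) cone `N̂(x; Ω)`:
`v ∈ N̂(x;Ω)` iff `limsup_{u →_Ω x} ⟨v, u - x⟩ / ‖u - x‖ ≤ 0`. -/
def preNC [NormedAddCommGroup E] [Inner ℝ E] (Ω : Set E) (x : E) : Set E :=
  {v | ∀ ε : ℝ, 0 < ε → ∃ δ : ℝ, 0 < δ ∧
      ∀ u ∈ Ω, ‖u - x‖ < δ → ⟪v, u - x⟫ ≤ ε * ‖u - x‖}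

/-- The basic/limiting (Mordukhovich) normal cone `N(x̄; Ω)`, obtained as the
sequential outer limit of prenormal cones at points of `Ω` converging to `x̄`. -/
def limNC [NormedAddCommGroup E] [Inner ℝ E] (Ω : Set E) (x : E) : Set E :=
  {v | ∃ xs vs : ℕ → E, (∀ k, xs k ∈ Ω) ∧ (∀ k, vs k ∈ preNC Ω (xs k)) ∧
      Tendsto xs atTop (𝓝 x) ∧ Tendsto vs atTop (𝓝 v)}

/-- Epigraph of an extended-real-valued function. -/
def epiF (φ : E → EReal) : Set (E × ℝ) := {p | φ p.1 ≤ (p.2 : EReal)}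

/-- The basic (limiting, Mordukhovich) subdifferential `∂φ(x)`. -/
def basicSubdiff [NormedAddCommGroup E] [Inner ℝ E] (φ : E → EReal) (x : E) : Set E :=
  {v | ((v, (-1 : ℝ)) : E × ℝ) ∈ limNC (epiF φ) (x, (φ x).toReal)}

/-- The singular subdifferential `∂^∞φ(x)`. -/
def singSubdiff [NormedAddCommGroup E] [Inner ℝ E] (φ : E → EReal) (x : E) : Set E :=
  {v | ((v, (0 : ℝ)) : E × ℝ) ∈ limNC (epiF φ) (x, (φ x).toReal)}

/-- Basic subdifferential of a real-valued function. -/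
def basicSubdiffR [NormedAddCommGroup E] [Inner ℝ E] (φ : E → ℝ) (x : E) : Set E :=
  basicSubdiff (fun u => ((φ u : ℝ) : EReal)) x

/-- The regular (Fréchet) subdifferential `∂̂φ(x)`:
`v ∈ ∂̂φ(x)` iff `liminf_{u → x} (φ(u) - φ(x) - ⟨v, u - x⟩)/‖u - x‖ ≥ 0`. -/
def regSubdiff [NormedAddCommGroup E] [Inner ℝ E] (φ : E → EReal) (x : E) : Set E :=
  {v | ∀ ε : ℝ, 0 < ε → ∃ δ : ℝ, 0 < δ ∧ ∀ u : E, ‖u - x‖ < δ →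
      ((((φ x).toReal + ⟪v, u - x⟫ - ε * ‖u - x‖ : ℝ)) : EReal) ≤ φ u}

/-- Regular subdifferential of a real-valued function. -/
def regSubdiffR [NormedAddCommGroup E] [Inner ℝ E] (φ : E → ℝ) (x : E) : Set E :=
  regSubdiff (fun u => ((φ u : ℝ) : EReal)) x

/-- Graph of a set-valued mapping. -/
def gphF (F : E → Set Y) : Set (E × Y) := {p | p.2 ∈ F p.1}

/-- The coderivative `D*F(x̄,ȳ)(w) = {v : (v, -w) ∈ N((x̄,ȳ); gph F)}`. -/
def coderiv [NormedAddCommGroup E] [Inner ℝ E] [NormedAddCommGroup Y] [Inner ℝ Y]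
    (F : E → Set Y) (x : E) (y : Y) (w : Y) : Set E :=
  {v | ((v, -w) : E × Y) ∈ limNC (gphF F) (x, y)}

/-- A set is locally closed around a point. -/
def LocallyClosedAt [TopologicalSpace E] (Ω : Set E) (x : E) : Prop :=
  ∃ U ∈ 𝓝 x, IsClosed (Ω ∩ U)

/-- A real-valued function is Lipschitz continuous around a point. -/
def LipschitzAround [NormedAddCommGroup E] (φ : E → ℝ) (x : E) : Prop :=
  ∃ (L : ℝ) (U : Set E), U ∈ 𝓝 x ∧ ∀ u ∈ U, ∀ w ∈ U, |φ u - φ w| ≤ L * ‖u - w‖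

/-- An extended-real-valued function is lower semicontinuous around a point. -/
def LscAround [TopologicalSpace E] (φ : E → EReal) (x : E) : Prop :=
  ∃ U ∈ 𝓝 x, LowerSemicontinuousOn φ U

/-- Inner semicontinuity of a set-valued mapping at a point of its graph. -/
def InnerSemicontAt [TopologicalSpace E] [TopologicalSpace Y]
    (M : E → Set Y) (x : E) (y : Y) : Prop :=
  ∀ xs : ℕ → E, Tendsto xs atTop (𝓝 x) → (∀ k, (M (xs k)).Nonempty) →
    ∃ ys : ℕ → Y, (∀ k, ys k ∈ M (xs k)) ∧ Tendsto ys atTop (𝓝 y)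

/-- The Lipschitz-like (Aubin) property of a set-valued mapping around a graph point. -/
def LipschitzLike [NormedAddCommGroup E] [NormedAddCommGroup Y]
    (F : E → Set Y) (x : E) (y : Y) : Prop :=
  ∃ (U : Set E) (V : Set Y) (ℓ : ℝ), U ∈ 𝓝 x ∧ V ∈ 𝓝 y ∧ 0 ≤ ℓ ∧
    ∀ a ∈ U, ∀ b ∈ U, ∀ z ∈ F a ∩ V, ∃ z' ∈ F b, ‖z - z'‖ ≤ ℓ * ‖a - b‖

/-- The optimal value (marginal) function `ϑ(x) = inf{φ(x,y) : y ∈ F(x)}`. -/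
def valueFn (φ : E × Y → ℝ) (F : E → Set Y) (x : E) : EReal :=
  sInf ((fun y => ((φ (x, y) : ℝ) : EReal)) '' F x)

/-- The argminimum mapping `M(x) = {y ∈ F(x) : φ(x,y) = ϑ(x)}`. -/
def argminMap (φ : E × Y → ℝ) (F : E → Set Y) (x : E) : Set Y :=
  {y | y ∈ F x ∧ ((φ (x, y) : ℝ) : EReal) = valueFn φ F x}


/-- Local extremality of a system of sets `{Ω i}` at a common point `x`:
there are a neighborhood `U` of `x` and sequences `a i k → 0` such that
`⋂ i (Ω i - a i k) ∩ U = ∅` for all `k`. -/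
def LocallyExtremalAt [NormedAddCommGroup E] {s : ℕ} (Ω : Fin s → Set E) (x : E) : Prop :=
  ∃ U ∈ 𝓝 x, ∃ a : Fin s → ℕ → E,
    (∀ i, Tendsto (a i) atTop (𝓝 0)) ∧
    ∀ k : ℕ, (⋂ i, (fun z => z + a i k) ⁻¹' Ω i) ∩ U = ∅

open scoped Classical in
/-- Extended-real-valued indicator function of a set (0 on the set, +∞ off it). -/
def indicatorE (Ω : Set E) (p : E) : EReal := if p ∈ Ω then 0 else ⊤

/-- Lower-level constraint mapping `F(x) = {y : fᵢ(x,y) ≤ 0, i = 1,…,r}`. -/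
def lowerF {r : ℕ} (f : Fin r → E × Y → ℝ) (x : E) : Set Y := {y | ∀ i, f i (x, y) ≤ 0}

/-- Feasibility in the single-level reformulation (P) of the optimistic bilevel program:
`gⱼ(x) ≤ 0`, `fᵢ(x,y) ≤ 0`, and `φ(x,y) ≤ ϑ(x)`. -/
def FeasibleP {r s : ℕ} (φ : E × Y → ℝ) (f : Fin r → E × Y → ℝ) (g : Fin s → E → ℝ)
    (x : E) (y : Y) : Prop :=
  (∀ j, g j x ≤ 0) ∧ (∀ i, f i (x, y) ≤ 0) ∧
    ((φ (x, y) : ℝ) : EReal) ≤ valueFn φ (lowerF f) x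

/-- `(x̄,ȳ)` is a local optimal solution to the single-level reformulation (P). -/
def LocalOptP [NormedAddCommGroup E] [NormedAddCommGroup Y] {r s : ℕ}
    (φ ψ : E × Y → ℝ) (f : Fin r → E × Y → ℝ) (g : Fin s → E → ℝ)
    (x : E) (y : Y) : Prop :=
  FeasibleP φ f g x y ∧
    ∃ U ∈ 𝓝 ((x, y) : E × Y), ∀ p ∈ U, FeasibleP φ f g p.1 p.2 → ψ (x, y) ≤ ψ p

/-- Partial calmness of (P) at a feasible point `(x̄,ȳ)` with constant `κ > 0`:
there is a neighborhood `U` of `(x̄,ȳ,0)` such that `ψ(x,y) - ψ(x̄,ȳ) + κ|ν| ≥ 0`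
for all `(x,y,ν) ∈ U` feasible to the perturbed problem. -/
def PartiallyCalm [NormedAddCommGroup E] [NormedAddCommGroup Y] {r s : ℕ}
    (φ ψ : E × Y → ℝ) (f : Fin r → E × Y → ℝ) (g : Fin s → E → ℝ)
    (x : E) (y : Y) (κ : ℝ) : Prop :=
  ∃ U ∈ 𝓝 ((x, y, (0 : ℝ)) : E × Y × ℝ), ∀ a ∈ U,
    (∀ j, g j a.1 ≤ 0) → (∀ i, f i (a.1, a.2.1) ≤ 0) →
    (((φ (a.1, a.2.1) + a.2.2 : ℝ) : EReal) = valueFn φ (lowerF f) a.1) →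
    ψ (x, y) ≤ ψ (a.1, a.2.1) + κ * |a.2.2|

/-- `(x̄,ȳ)` is a local optimal solution to the penalized problem:
minimize `ψ(x,y) + κ(φ(x,y) - ϑ(x))` subject to `gⱼ(x) ≤ 0`, `fᵢ(x,y) ≤ 0`. -/
def LocalOptPen [NormedAddCommGroup E] [NormedAddCommGroup Y] {r s : ℕ}
    (φ ψ : E × Y → ℝ) (f : Fin r → E × Y → ℝ) (g : Fin s → E → ℝ)
    (x : E) (y : Y) (κ : ℝ) : Prop :=
  ∃ U ∈ 𝓝 ((x, y) : E × Y), ∀ p ∈ U, (∀ j, g j p.1 ≤ 0) → (∀ i, f i p ≤ 0) →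
    ((ψ (x, y) : ℝ) : EReal) + (κ : EReal) * (((φ (x, y) : ℝ) : EReal) - valueFn φ (lowerF f) x)
      ≤ ((ψ p : ℝ) : EReal) + (κ : EReal) * (((φ p : ℝ) : EReal) - valueFn φ (lowerF f) p.1)

/-- Lower-level regularity (generalized MFCQ for the lower-level constraints) at `(x̄,ȳ)`. -/
def LowerLevelRegular [NormedAddCommGroup E] [Inner ℝ E]
    [NormedAddCommGroup Y] [NormedSpace ℝ Y] [Inner ℝ Y]
    {r : ℕ} (f : Fin r → E × Y → ℝ) (x : E) (y : Y) : Prop :=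
  ∀ (w : Fin r → E × Y) (l : Fin r → ℝ),
    (∀ i, f i (x, y) = 0 → w i ∈ basicSubdiffR (f i) (x, y)) →
    (∀ i, 0 ≤ l i) → (∀ i, f i (x, y) ≠ 0 → l i = 0) →
    ∑ i, l i • (w i).2 = 0 → ∀ i, l i = 0

/-- Upper-level regularity (generalized MFCQ for the upper-level constraints) at `x̄`. -/
def UpperLevelRegular [NormedAddCommGroup E] [NormedSpace ℝ E] [Inner ℝ E]
    {s : ℕ} (g : Fin s → E → ℝ) (x : E) : Prop :=
  ∀ (w : Fin s → E) (l : Fin s → ℝ),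
    (∀ j, g j x = 0 → w j ∈ basicSubdiffR (g j) x) →
    (∀ j, 0 ≤ l j) → (∀ j, g j x ≠ 0 → l j = 0) →
    ∑ j, l j • w j = 0 → ∀ j, l j = 0

/-!
The shear `(u, β) ↦ (u, β - ψ u)` maps `epi (φ + ψ)` onto `epi φ`. When `ψ` is
`K`-Lipschitz near `x`, it turns a Fréchet normal `(v, λ)` to the first epigraph into a
`|λ| K`-normal to the second. Along the sequences defining a singular normal `λ → 0`, and in
finite dimensions a limit of `ε`-normals with `ε → 0` is a limiting normal: project `z + t v`
onto the locally closed set and rescale the residual by `t⁻¹`. Hence `∂^∞(φ + ψ)(x) ⊆ ∂^∞φ(x)`; applying this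
to `φ + ψ` and `-ψ` gives equality, and `ψ = φ₂ + ⋯ + φₛ` is Lipschitz around `x̄`.
-/

open Set Metric
open scoped NNReal

section ProductPairing

variable [Inner ℝ E]

theorem prod_real_inner_apply (p q : E × ℝ) : ⟪p, q⟫ = ⟪p.1, q.1⟫ + p.2 * q.2 := by
  change ⟪p.1, q.1⟫ + ⟪p.2, q.2⟫ = _
  rw [RCLike.inner_apply, conj_trivial, mul_comm]

end ProductPairing

section L2Norm

variable {α β : Type*} [SeminormedAddCommGroup α] [SeminormedAddCommGroup β]

theorem norm_le_norm_toLp_two (p : α × β) : ‖p‖ ≤ ‖WithLp.toLp 2 p‖ := by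
  rw [Prod.norm_def]
  exact max_le (WithLp.norm_fst_le (x := WithLp.toLp 2 p))
    (WithLp.norm_snd_le (x := WithLp.toLp 2 p))

theorem norm_toLp_two_sq_le (p : α × β) : ‖WithLp.toLp 2 p‖ ^ 2 ≤ 2 * ‖p‖ ^ 2 := by
  rw [WithLp.prod_norm_sq_eq_of_L2, two_mul]
  exact add_le_add (pow_le_pow_left₀ (norm_nonneg _) (norm_fst_le p) 2)
    (pow_le_pow_left₀ (norm_nonneg _) (norm_snd_le p) 2)

end L2Norm

section NormalCones

variable {F : Type*} [NormedAddCommGroup F] [Inner ℝ F]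

/-- Mordukhovich's `ε`-normals `N̂_ε(x; Ω)`; `preNC` is the case `ε = 0`. -/
def epsPreNC (ε : ℝ) (Ω : Set F) (x : F) : Set F :=
  {v | ∀ e : ℝ, 0 < e → ∃ δ : ℝ, 0 < δ ∧
      ∀ u ∈ Ω, ‖u - x‖ < δ → ⟪v, u - x⟫ ≤ (ε + e) * ‖u - x‖}

theorem epsPreNC_mono {ε ε' : ℝ} {Ω Ω' : Set F} {x : F} (hε : ε ≤ ε')
    (hΩ : Ω' ⊆ Ω) :
    epsPreNC ε Ω x ⊆ epsPreNC ε' Ω' x := fun _ hv e he =>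
  (hv e he).imp fun _ ⟨hδ, h⟩ => ⟨hδ, fun u hu hux =>
    (h u (hΩ hu) hux).trans (mul_le_mul_of_nonneg_right (by linarith) (norm_nonneg _))⟩

theorem preNC_inter_subset {Ω U : Set F} {x : F} (hU : U ∈ 𝓝 x) :
    preNC (Ω ∩ U) x ⊆ preNC Ω x := by
  intro v hv ε hε
  obtain ⟨r, hr, hball⟩ := Metric.mem_nhds_iff.1 hU
  obtain ⟨δ, hδ, h⟩ := hv ε hε
  refine ⟨min δ r, lt_min hδ hr, fun u hu hux =>
    h u ⟨hu, hball ?_⟩ (hux.trans_le (min_le_left _ _))⟩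
  rw [Metric.mem_ball, dist_eq_norm]
  exact hux.trans_le (min_le_right _ _)

theorem mem_limNC_of_forall_dist_lt {Ω : Set F} {x v : F}
    (h : ∀ η > 0, ∃ w ∈ Ω, ∃ u ∈ preNC Ω w, dist w x < η ∧ dist u v < η) :
    v ∈ limNC Ω x := by
  choose w hw u hu hwx huv using fun k : ℕ => h (1 / (k + 1)) Nat.one_div_pos_of_nat
  have hlim : Tendsto (fun k : ℕ => (1 : ℝ) / (k + 1)) atTop (𝓝 0) :=
    tendsto_one_div_add_atTop_nhds_zero_nat
  refine ⟨w, u, hw, hu, ?_, ?_⟩ <;> rw [tendsto_iff_dist_tendsto_zero]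
  · exact squeeze_zero (fun _ => dist_nonneg) (fun k => (hwx k).le) hlim
  · exact squeeze_zero (fun _ => dist_nonneg) (fun k => (huv k).le) hlim

end NormalCones

section Projection

variable [NormedAddCommGroup E] [InnerProductSpace ℝ E]

/-- `E × ℝ` carries the sup norm; the pairing `prodInnerAux` is the inner product of
`WithLp 2 (E × ℝ)`, whose norm is the one used for projections. -/
theorem prod_real_inner_eq_inner_toLp (p q : E × ℝ) :
    ⟪p, q⟫ = ⟪WithLp.toLp 2 p, WithLp.toLp 2 q⟫ := rfl

theorem inv_smul_sub_mem_preNC_of_isMinOn {C : Set (E × ℝ)} {z w : E × ℝ} {t : ℝ}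
    (ht : 0 < t) (hmin : IsMinOn (fun u => ‖WithLp.toLp 2 (z - u)‖) C w) :
    t⁻¹ • (z - w) ∈ preNC C w := by
  intro ε hε
  refine ⟨t * ε, by positivity, fun u hu hut => ?_⟩
  set A := WithLp.toLp 2 (z - w)
  set B := WithLp.toLp 2 (u - w)
  have hAB : ‖A - B‖ ^ 2 ≥ ‖A‖ ^ 2 := by
    have h : WithLp.toLp 2 (z - u) = A - B := by
      rw [← WithLp.toLp_sub]; congr 1; abel
    exact pow_le_pow_left₀ (norm_nonneg _) (h ▸ hmin hu) 2
  rw [norm_sub_sq_real] at hAB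
  have hB := norm_toLp_two_sq_le (u - w)
  have hinner : ⟪A, B⟫ ≤ t * ε * ‖u - w‖ := by nlinarith [norm_nonneg (u - w)]
  rw [prod_real_inner_eq_inner_toLp, WithLp.toLp_smul, real_inner_smul_left, inv_mul_le_iff₀ ht]
  linarith

theorem norm_sub_le_of_isMinOn {C : Set (E × ℝ)} {z₀ v₀ w : E × ℝ} {t δ ε : ℝ}
    (ht : 0 < t) (hε : 0 ≤ ε) (hz₀ : z₀ ∈ C) (hw : w ∈ C)
    (hmin : IsMinOn (fun u => ‖WithLp.toLp 2 (z₀ + t • v₀ - u)‖) C w)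
    (hv₀ : ∀ u ∈ C, ‖u - z₀‖ < δ → ⟪v₀, u - z₀⟫ ≤ ε * ‖u - z₀‖)
    (htδ : 2 * t * ‖WithLp.toLp 2 v₀‖ < δ) : ‖w - z₀‖ ≤ 2 * t * ε := by
  set V := WithLp.toLp 2 v₀
  set D := WithLp.toLp 2 (w - z₀)
  have hmin₀ : ‖t • V - D‖ ≤ ‖t • V‖ := by
    have h :
        ‖WithLp.toLp 2 (z₀ + t • v₀ - w)‖ ≤ ‖WithLp.toLp 2 (z₀ + t • v₀ - z₀)‖ :=
      hmin hz₀
    rwa [add_sub_cancel_left, show z₀ + t • v₀ - w = t • v₀ - (w - z₀) by abel,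
      WithLp.toLp_sub, WithLp.toLp_smul] at h
  have hD : ‖w - z₀‖ ≤ ‖D‖ := norm_le_norm_toLp_two _
  have hnear : ‖w - z₀‖ < δ := by
    have h := norm_le_norm_add_norm_sub' D (t • V)
    rw [norm_sub_rev, norm_smul, Real.norm_of_nonneg ht.le] at h
    rw [norm_smul, Real.norm_of_nonneg ht.le] at hmin₀
    linarith
  have hsq : ‖D‖ ^ 2 ≤ 2 * t * ⟪V, D⟫ := by
    have h := pow_le_pow_left₀ (norm_nonneg _) hmin₀ 2
    rw [norm_sub_sq_real, real_inner_smul_left] at h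
    linarith
  have hvw : ⟪V, D⟫ ≤ ε * ‖w - z₀‖ := hv₀ w hw hnear
  have hN : ‖w - z₀‖ * ‖w - z₀‖ ≤ (2 * t * ε) * ‖w - z₀‖ := by
    calc ‖w - z₀‖ * ‖w - z₀‖ ≤ ‖D‖ ^ 2 := by
          rw [← sq]; exact pow_le_pow_left₀ (norm_nonneg _) hD 2
      _ ≤ 2 * t * ⟪V, D⟫ := hsq
      _ ≤ 2 * t * (ε * ‖w - z₀‖) := by gcongr
      _ = (2 * t * ε) * ‖w - z₀‖ := by ring
  rcases (norm_nonneg (w - z₀)).eq_or_lt with h0 | hpos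
  · rw [← h0]; positivity
  · exact le_of_mul_le_mul_right hN hpos

theorem exists_preNC_near_of_mem_epsPreNC {C : Set (E × ℝ)} {z₀ v₀ : E × ℝ} {ε η : ℝ}
    (hC : IsCompact C) (hz₀ : z₀ ∈ C) (hv₀ : v₀ ∈ epsPreNC ε C z₀) (hε : 0 ≤ ε)
    (hη : 0 < η) :
    ∃ w ∈ C, ∃ u ∈ preNC C w, ‖w - z₀‖ ≤ η ∧ ‖u - v₀‖ ≤ 2 * ε + η := by
  obtain ⟨δ, hδ, hv₀δ⟩ := hv₀ (η / 2) (by positivity)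
  set V := WithLp.toLp 2 v₀
  obtain ⟨t, ⟨htδ, htη⟩, ht⟩ :
      ∃ t : ℝ, (2 * t * ‖V‖ < δ ∧ 2 * t * (ε + η / 2) < η) ∧ 0 < t := by
    have h₁ : ∀ᶠ t in 𝓝 (0 : ℝ), 2 * t * ‖V‖ < δ :=
      (by fun_prop : Continuous fun t : ℝ => 2 * t * ‖V‖).continuousAt.eventually_lt
        continuousAt_const (by simpa using hδ)
    have h₂ : ∀ᶠ t in 𝓝 (0 : ℝ), 2 * t * (ε + η / 2) < η :=
      (by fun_prop : Continuous fun t : ℝ => 2 * t * (ε + η / 2)).continuousAt.eventually_lt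
        continuousAt_const (by simpa using hη)
    exact ((h₁.and h₂).filter_mono nhdsWithin_le_nhds |>.and self_mem_nhdsWithin).exists
      (f := 𝓝[>] 0)
  obtain ⟨w, hw, hmin⟩ := hC.exists_isMinOn ⟨z₀, hz₀⟩
    (f := fun u => ‖WithLp.toLp 2 (z₀ + t • v₀ - u)‖) (by fun_prop)
  have hwz₀ := norm_sub_le_of_isMinOn ht (by positivity) hz₀ hw hmin hv₀δ htδ
  refine ⟨w, hw, t⁻¹ • (z₀ + t • v₀ - w), inv_smul_sub_mem_preNC_of_isMinOn ht hmin,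
    by linarith, ?_⟩
  have h : t⁻¹ • (z₀ + t • v₀ - w) - v₀ = -(t⁻¹ • (w - z₀)) := by
    rw [smul_sub, smul_sub, smul_add, smul_smul, inv_mul_cancel₀ ht.ne', one_smul]; abel
  rw [h, norm_neg, norm_smul, Real.norm_of_nonneg (inv_nonneg.2 ht.le)]
  calc t⁻¹ * ‖w - z₀‖ ≤ t⁻¹ * (2 * t * (ε + η / 2)) := by gcongr
    _ = 2 * ε + η := by field_simp

theorem mem_limNC_of_tendsto_epsPreNC [FiniteDimensional ℝ E] {Ω : Set (E × ℝ)}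
    {z v : E × ℝ} {zs vs : ℕ → E × ℝ} {ε : ℕ → ℝ} (hΩ : LocallyClosedAt Ω z)
    (hz : Tendsto zs atTop (𝓝 z)) (hv : Tendsto vs atTop (𝓝 v))
    (hε : Tendsto ε atTop (𝓝 0))
    (hzv : ∀ᶠ k in atTop, zs k ∈ Ω ∧ vs k ∈ epsPreNC (ε k) Ω (zs k)) :
    v ∈ limNC Ω z := by
  obtain ⟨U, hU, hcl⟩ := hΩ
  obtain ⟨r, hr, hrU⟩ := nhds_basis_closedBall.mem_iff.1 hU
  have hC : IsCompact (Ω ∩ closedBall z r) := by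
    rw [← inter_eq_right.2 hrU, ← inter_assoc]
    exact (isCompact_closedBall z r).inter_left hcl
  refine mem_limNC_of_forall_dist_lt fun η hη => ?_
  set ρ := min η r
  have hρ : 0 < ρ := lt_min hη hr
  obtain ⟨k, hzk, hvk, hεk, hΩk, hNk⟩ := ((hz.eventually (ball_mem_nhds z (half_pos hρ))).and
    ((hv.eventually (ball_mem_nhds v (half_pos hη))).and
    ((hε.eventually (gt_mem_nhds (by positivity : (0 : ℝ) < η / 8))).and hzv))).exists
  have hzC : zs k ∈ Ω ∩ closedBall z r :=
    ⟨hΩk, mem_closedBall.2 (by linarith [min_le_right η r])⟩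
  obtain ⟨w, hwC, u, hu, hwzk, huv⟩ := exists_preNC_near_of_mem_epsPreNC hC hzC
    (epsPreNC_mono hεk.le inter_subset_left hNk) (by positivity) (by positivity : 0 < ρ / 4)
  have hwz : dist w z < ρ := by
    linarith [dist_triangle w (zs k) z, dist_eq_norm w (zs k)]
  refine ⟨w, hwC.1, u, preNC_inter_subset (closedBall_mem_nhds_of_mem ?_) hu,
    hwz.trans_le (min_le_left _ _), ?_⟩
  · exact mem_ball.2 (hwz.trans_le (min_le_right _ _))
  · linarith [dist_triangle u (vs k) v, dist_eq_norm u (vs k), min_le_left η r]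

end Projection

section Epigraph

theorem mem_epiF_add_iff {φ : E → EReal} {ψ : E → ℝ} {u : E} {β : ℝ} :
    (u, β) ∈ epiF (fun x => φ x + ψ x) ↔ (u, β - ψ u) ∈ epiF φ := by
  change φ u + ψ u ≤ (β : EReal) ↔ φ u ≤ ((β - ψ u : ℝ) : EReal)
  rw [EReal.coe_sub,
    EReal.le_sub_iff_add_le (.inl (EReal.coe_ne_bot _)) (.inl (EReal.coe_ne_top _))]

variable [NormedAddCommGroup E]

theorem norm_shear_sub_le {ψ : E → ℝ} {K : ℝ} (hK : 0 ≤ K) {u x : E} {γ α : ℝ}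
    (hψ : |ψ u - ψ x| ≤ K * ‖u - x‖) :
    ‖((u, γ + ψ u) : E × ℝ) - (x, α)‖ ≤
      (1 + K) * ‖((u, γ) : E × ℝ) - (x, α - ψ x)‖ := by
  set N := ‖((u, γ) : E × ℝ) - (x, α - ψ x)‖
  have hux : ‖u - x‖ ≤ N := norm_fst_le (((u, γ) : E × ℝ) - (x, α - ψ x))
  have hγ : |γ - (α - ψ x)| ≤ N := norm_snd_le (((u, γ) : E × ℝ) - (x, α - ψ x))
  refine (Prod.norm_def _).trans_le (max_le ?_ ?_)
  · exact hux.trans (le_mul_of_one_le_left (norm_nonneg _) (le_add_of_nonneg_right hK))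
  · change |γ + ψ u - α| ≤ _
    calc |γ + ψ u - α| = |(γ - (α - ψ x)) + (ψ u - ψ x)| := by ring_nf
      _ ≤ |γ - (α - ψ x)| + |ψ u - ψ x| := abs_add_le _ _
      _ ≤ (1 + K) * N := by nlinarith [mul_le_mul_of_nonneg_left hux hK]

variable [Inner ℝ E]

theorem mem_epsPreNC_of_mem_preNC_epiF_add {φ : E → EReal} {ψ : E → ℝ} {K : ℝ≥0}
    {U : Set E} {x : E} {α : ℝ} {w : E × ℝ} (hU : U ∈ 𝓝 x) (hψ : LipschitzOnWith K ψ U)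
    (hw : w ∈ preNC (epiF fun u => φ u + ψ u) (x, α)) :
    w ∈ epsPreNC (|w.2| * K) (epiF φ) (x, α - ψ x) := by
  intro e he
  obtain ⟨r, hr, hball⟩ := Metric.mem_nhds_iff.1 hU
  obtain ⟨δ, hδ, hδw⟩ := hw (e / (1 + K)) (by positivity)
  refine ⟨min (δ / (1 + K)) r, by positivity, ?_⟩
  rintro ⟨u, γ⟩ hp hpn
  set N := ‖((u, γ) : E × ℝ) - (x, α - ψ x)‖
  have hux : ‖u - x‖ ≤ N := norm_fst_le (((u, γ) : E × ℝ) - (x, α - ψ x))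
  have hψux : |ψ u - ψ x| ≤ K * ‖u - x‖ := by
    have hu : u ∈ U :=
      hball (mem_ball_iff_norm.2 (hux.trans_lt (hpn.trans_le (min_le_right _ _))))
    simpa only [Real.dist_eq, dist_eq_norm, Real.norm_eq_abs] using
      hψ.dist_le_mul u hu x (mem_of_mem_nhds hU)
  have hqn := norm_shear_sub_le (γ := γ) (α := α) K.coe_nonneg hψux
  have hN : (1 + K) * N < δ := by
    have := hpn.trans_le (min_le_left _ _)
    rwa [lt_div_iff₀ (by positivity), mul_comm] at this
  have h := hδw _ (mem_epiF_add_iff.2 (by simpa using hp)) (hqn.trans_lt hN)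
  have he' : e / (1 + K) * ‖((u, γ + ψ u) : E × ℝ) - (x, α)‖ ≤ e * N := by
    calc _ ≤ e / (1 + K) * ((1 + K) * N) := by gcongr
      _ = e * N := by field_simp
  have hshift : w.2 * (ψ x - ψ u) ≤ |w.2| * (K * N) := by
    refine (le_abs_self _).trans ?_
    rw [abs_mul, abs_sub_comm]
    gcongr
    exact hψux.trans (by gcongr)
  rw [prod_real_inner_apply] at h ⊢
  change ⟪w.1, u - x⟫ + w.2 * (γ + ψ u - α) ≤ _ at h
  change ⟪w.1, u - x⟫ + w.2 * (γ - (α - ψ x)) ≤ _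
  linarith

end Epigraph

section Semicontinuity

variable [TopologicalSpace E]

theorem LscAround.add_coe {φ : E → EReal} {ψ : E → ℝ} {U : Set E} {x : E}
    (hφ : LscAround φ x) (hU : U ∈ 𝓝 x) (hψ : ContinuousOn ψ U) :
    LscAround (fun u => φ u + ψ u) x := by
  obtain ⟨V, hV, hφV⟩ := hφ
  refine ⟨V ∩ U, inter_mem hV hU, (hφV.mono inter_subset_left).add'
    (continuous_coe_real_ereal.comp_continuousOn
      (hψ.mono inter_subset_right)).lowerSemicontinuousOn
    fun u _ => EReal.continuousAt_add (.inr (EReal.coe_ne_bot _)) (.inr (EReal.coe_ne_top _))⟩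

theorem LscAround.locallyClosedAt_epiF [RegularSpace E] {φ : E → EReal} {x : E}
    (hφ : LscAround φ x) (c : ℝ) : LocallyClosedAt (epiF φ) (x, c) := by
  obtain ⟨U, hU, hφU⟩ := hφ
  obtain ⟨V, hV, hVc, hVU⟩ := exists_mem_nhds_isClosed_subset hU
  refine ⟨V ×ˢ univ, prod_mem_nhds hV univ_mem, ?_⟩
  convert ((lowerSemicontinuousOn_iff_isClosed_epigraph hVc).1 (hφU.mono hVU)).preimage
    (continuous_fst.prodMk (continuous_coe_real_ereal.comp continuous_snd)) using 1
  ext ⟨u, γ⟩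
  simp [epiF, and_comm]

end Semicontinuity

section Lipschitz

variable [NormedAddCommGroup E]

theorem LipschitzAround.add {f g : E → ℝ} {x : E} (hf : LipschitzAround f x)
    (hg : LipschitzAround g x) : LipschitzAround (fun u => f u + g u) x := by
  obtain ⟨L₁, U₁, hU₁, hf⟩ := hf
  obtain ⟨L₂, U₂, hU₂, hg⟩ := hg
  refine ⟨L₁ + L₂, U₁ ∩ U₂, inter_mem hU₁ hU₂, fun u hu w hw => ?_⟩
  calc |f u + g u - (f w + g w)| = |(f u - f w) + (g u - g w)| := by ring_nf
    _ ≤ |f u - f w| + |g u - g w| := abs_add_le _ _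
    _ ≤ L₁ * ‖u - w‖ + L₂ * ‖u - w‖ :=
        add_le_add (hf u hu.1 w hw.1) (hg u hu.2 w hw.2)
    _ = (L₁ + L₂) * ‖u - w‖ := by ring

theorem LipschitzAround.sum {ι : Type*} {f : ι → E → ℝ} {x : E} (s : Finset ι)
    (hf : ∀ i ∈ s, LipschitzAround (f i) x) :
    LipschitzAround (fun u => ∑ i ∈ s, f i u) x := by
  induction s using Finset.cons_induction with
  | empty => exact ⟨0, univ, univ_mem, by simp⟩
  | cons i s hi ih =>
    simpa only [Finset.sum_cons] using (hf i (Finset.mem_cons_self i s)).add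
      (ih fun j hj => hf j (Finset.mem_cons_of_mem hj))

theorem LipschitzAround.exists_lipschitzOnWith {f : E → ℝ} {x : E} (hf : LipschitzAround f x) :
    ∃ K : ℝ≥0, ∃ U ∈ 𝓝 x, LipschitzOnWith K f U := by
  obtain ⟨L, U, hU, hL⟩ := hf
  refine ⟨L.toNNReal, U, hU, LipschitzOnWith.of_dist_le_mul fun u hu w hw => ?_⟩
  rw [Real.dist_eq, dist_eq_norm]
  exact (hL u hu w hw).trans (by gcongr; exact Real.le_coe_toNNReal L)

end Lipschitz

section SumRule

variable [NormedAddCommGroup E] [InnerProductSpace ℝ E] [FiniteDimensional ℝ E]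

theorem singSubdiff_add_subset {φ : E → EReal} {ψ : E → ℝ} {K : ℝ≥0} {U : Set E} {x : E}
    (hφ : LscAround φ x) (htop : φ x ≠ ⊤) (hbot : φ x ≠ ⊥) (hU : U ∈ 𝓝 x)
    (hψ : LipschitzOnWith K ψ U) :
    singSubdiff (fun u => φ u + ψ u) x ⊆ singSubdiff φ x := by
  rintro v ⟨xs, vs, hxs, hvs, hx, hv⟩
  have hbase : (φ x + ψ x).toReal = (φ x).toReal + ψ x := by
    rw [EReal.toReal_add htop hbot (EReal.coe_ne_top _) (EReal.coe_ne_bot _), EReal.toReal_coe]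
  change Tendsto xs atTop (𝓝 (x, (φ x + ψ x).toReal)) at hx
  rw [hbase] at hx
  set shear : E × ℝ → E × ℝ := fun p => (p.1, p.2 - ψ p.1)
  have hshear : ContinuousAt shear (x, (φ x).toReal + ψ x) :=
    continuousAt_fst.prodMk (continuousAt_snd.sub
      ((hψ.continuousOn.continuousAt hU).comp continuousAt_fst))
  have hUk : ∀ᶠ k in atTop, U ∈ 𝓝 (xs k).1 :=
    (continuous_fst.tendsto _ |>.comp hx).eventually (eventually_mem_nhds_iff.2 hU)
  refine mem_limNC_of_tendsto_epsPreNC (hφ.locallyClosedAt_epiF _) (zs := shear ∘ xs)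
    (ε := fun k => |(vs k).2| * K) ?_ hv ?_ ?_
  · simpa [shear] using hshear.tendsto.comp hx
  · simpa using ((continuous_snd.tendsto _).comp hv).abs.mul_const (K : ℝ)
  · filter_upwards [hUk] with k hk
    exact ⟨mem_epiF_add_iff.1 (hxs k), mem_epsPreNC_of_mem_preNC_epiF_add hk hψ (hvs k)⟩

theorem singSubdiff_add_eq {φ : E → EReal} {ψ : E → ℝ} {K : ℝ≥0} {U : Set E} {x : E}
    (hφ : LscAround φ x) (htop : φ x ≠ ⊤) (hbot : φ x ≠ ⊥) (hU : U ∈ 𝓝 x)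
    (hψ : LipschitzOnWith K ψ U) :
    singSubdiff (fun u => φ u + ψ u) x = singSubdiff φ x := by
  refine (singSubdiff_add_subset hφ htop hbot hU hψ).antisymm ?_
  have h := singSubdiff_add_subset (φ := fun u => φ u + ψ u) (ψ := fun u => -ψ u)
    (hφ.add_coe hU hψ.continuousOn) (EReal.add_ne_top htop (EReal.coe_ne_top _))
    (EReal.add_ne_bot_iff.2 ⟨hbot, EReal.coe_ne_bot _⟩) hU hψ.neg
  simpa only [EReal.coe_neg, ← sub_eq_add_neg, EReal.add_sub_cancel_right] using h

end SumRule

theorem EReal.coe_finset_sum {ι : Type*} (s : Finset ι) (f : ι → ℝ) :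
    ((∑ i ∈ s, f i : ℝ) : EReal) = ∑ i ∈ s, (f i : EReal) :=
  map_sum (⟨⟨(↑), EReal.coe_zero⟩, EReal.coe_add⟩ : ℝ →+ EReal) f s

theorem singular_subdiff_sum_rule_general {n m : ℕ}
    (φ₁ : EuclideanSpace ℝ (Fin n) → EReal) (φ : Fin m → EuclideanSpace ℝ (Fin n) → ℝ) (xbar : EuclideanSpace ℝ (Fin n))
    (hbot : ∀ u, φ₁ u ≠ ⊥) (hdom : φ₁ xbar ≠ ⊤)
    (hlsc : LscAround φ₁ xbar) (hlip : ∀ i, LipschitzAround (φ i) xbar) :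
    singSubdiff (fun u => φ₁ u + ∑ i, ((φ i u : ℝ) : EReal)) xbar
      = singSubdiff φ₁ xbar := by
  obtain ⟨K, U, hU, hψ⟩ :=
    (LipschitzAround.sum Finset.univ fun i _ => hlip i).exists_lipschitzOnWith
  simp_rw [← EReal.coe_finset_sum]
  exact singSubdiff_add_eq hlsc hdom (hbot xbar) hU hψ

/-- Singular subdifferential sum rule, with equality. -/
theorem singular_subdiff_sum_rule {n m : ℕ} (hm : 1 ≤ m)
    (φ₁ : EuclideanSpace ℝ (Fin n) → EReal) (φ : Fin m → EuclideanSpace ℝ (Fin n) → ℝ) (xbar : EuclideanSpace ℝ (Fin n))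
    (hbot : ∀ u, φ₁ u ≠ ⊥) (hdom : φ₁ xbar ≠ ⊤)
    (hlsc : LscAround φ₁ xbar) (hlip : ∀ i, LipschitzAround (φ i) xbar) :
    singSubdiff (fun u => φ₁ u + ∑ i, ((φ i u : ℝ) : EReal)) xbar
      = singSubdiff φ₁ xbar :=
  singular_subdiff_sum_rule_general φ₁ φ xbar hbot hdom hlsc hlip

end
end

section
/- Let (x̄,ȳ) be feasible to problem (P) and suppose that for some constant κ > 0 it is a local optimal solution to the penalized problem: minimize ψ(x,y) + κ(φ(x,y) − ϑ(x)) subject to gⱼ(x) ≤ 0 for j = 1,…,s and fᵢ(x,y) ≤ 0 for i = 1,…,r. Then (P) is partially calm at (x̄,ȳ). -/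
/-!
Since `ȳ ∈ F(x̄)`, the penalty `κ(φ(x̄,ȳ) − ϑ(x̄))` is nonnegative (possibly `+∞`), while at a point
with `φ(x,y) + ν = ϑ(x)` it is the real number `−κν ≤ κ|ν|`. Local optimality of `(x̄,ȳ)` for the
penalized problem therefore gives `ψ(x̄,ȳ) ≤ ψ(x,y) + κ|ν|` on the preimage of its neighbourhood
under `(x,y,ν) ↦ (x,y)`, with the same constant `κ`.
-/

open Filter Topology RealInnerProductSpace

noncomputable section

variable {E Y : Type*}

theorem valueFn_le_of_mem {φ : E × Y → ℝ} {F : E → Set Y} {x : E} {y : Y} (hy : y ∈ F x) :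
    valueFn φ F x ≤ ((φ (x, y) : ℝ) : EReal) :=
  sInf_le ⟨y, hy, rfl⟩

theorem le_penalized_of_mem {φ : E × Y → ℝ} {F : E → Set Y} {x : E} {y : Y} (a : ℝ) {κ : ℝ}
    (hκ : 0 ≤ κ) (hy : y ∈ F x) :
    (a : EReal) ≤ a + (κ : EReal) * (((φ (x, y) : ℝ) : EReal) - valueFn φ F x) := by
  have hgap : 0 ≤ ((φ (x, y) : ℝ) : EReal) - valueFn φ F x :=
    (EReal.sub_nonneg (.inl (EReal.coe_ne_top _)) (.inl (EReal.coe_ne_bot _))).2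
      (valueFn_le_of_mem hy)
  exact le_add_of_nonneg_right (mul_nonneg (EReal.coe_nonneg.2 hκ) hgap)

theorem penalized_eq_of_valueFn_eq {φ : E × Y → ℝ} {F : E → Set Y} {p : E × Y} {ν : ℝ} (a κ : ℝ)
    (hν : ((φ p + ν : ℝ) : EReal) = valueFn φ F p.1) :
    (a : EReal) + (κ : EReal) * (((φ p : ℝ) : EReal) - valueFn φ F p.1) =
      ((a - κ * ν : ℝ) : EReal) := by
  rw [← hν, ← EReal.coe_sub, ← EReal.coe_mul, ← EReal.coe_add]
  congr 1
  ring

theorem partiallyCalm_of_localOptPen [NormedAddCommGroup E] [NormedAddCommGroup Y] {r s : ℕ}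
    {φ ψ : E × Y → ℝ} {f : Fin r → E × Y → ℝ} {g : Fin s → E → ℝ} {x : E} {y : Y} {κ : ℝ}
    (hκ : 0 ≤ κ) (hy : y ∈ lowerF f x) (hpen : LocalOptPen φ ψ f g x y κ) :
    PartiallyCalm φ ψ f g x y κ := by
  obtain ⟨U, hU, hopt⟩ := hpen
  have hproj : Continuous fun a : E × Y × ℝ => (a.1, a.2.1) := by fun_prop
  refine ⟨_, hproj.continuousAt.preimage_mem_nhds hU, ?_⟩
  rintro ⟨x', y', ν⟩ ha hg hf hν
  have h := (le_penalized_of_mem (ψ (x, y)) hκ hy).trans (hopt (x', y') ha hg hf)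
  rw [penalized_eq_of_valueFn_eq _ _ hν] at h
  have h' : ψ (x, y) ≤ ψ (x', y') - κ * ν := mod_cast h
  linarith [mul_le_mul_of_nonneg_left (neg_le_abs ν) hκ]

/-- Local optimality in the penalized problem yields partial calmness. -/
theorem penalization_partial_calmness {n m r s : ℕ}
    (φ ψ : EuclideanSpace ℝ (Fin n) × EuclideanSpace ℝ (Fin m) → ℝ) (f : Fin r → EuclideanSpace ℝ (Fin n) × EuclideanSpace ℝ (Fin m) → ℝ) (g : Fin s → EuclideanSpace ℝ (Fin n) → ℝ)
    (xbar : EuclideanSpace ℝ (Fin n)) (ybar : EuclideanSpace ℝ (Fin m)) (κ : ℝ) (hκ : 0 < κ)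
    (hfeas : FeasibleP φ f g xbar ybar)
    (hpen : LocalOptPen φ ψ f g xbar ybar κ) :
    ∃ κ' > 0, PartiallyCalm φ ψ f g xbar ybar κ' :=
  ⟨κ, hκ, partiallyCalm_of_localOptPen hκ.le hfeas.2.1 hpen⟩

end
end
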